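/- Let G be a finite group, ℓ a prime, and suppose O_ℓ(Z(G)) = 1 (the center of G has order prime to ℓ). Let Δ be the simplicial complex of chains 1 = P₀ < P₁ < ⋯ < Pₙ of ℓ-subgroups of G starting at the trivial group, and Δ' the subcomplex of such chains with all Pᵢ abelian. Then, for any G-conjugation-stable integer-valued function f on subgroups of G, Σ_{σ ∈ Δ/G} (−1)^{|σ|} f(G_σ) = Σ_{ρ ∈ Δ'/G} (−1)^{|ρ|} f(G_ρ), where the sums run over G-orbit representatives of chains and G_σ is the chain stabilizer. -/

import Mathlib

/-!
Let `T` be the top of a chain `σ = (1 = P₀ < ⋯ < Pₙ)` of `ℓ`-subgroups and suppose `T` is not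
abelian. Take `m` minimal with `⁅T, T⁆ ≤ P_m` and put `K = ⁅T, T⁆ P_{m-1}`. Every term of `σ` lies
below `P_{m-1}` or above `K`, and `K ≠ T` because `⁅T, T⁆` lies in the Frattini subgroup of the
`ℓ`-group `T`. Hence adding `K` to `σ` or removing it is a conjugation-equivariant involution of
the non-abelian chains which keeps the top and the stabilizer and changes the length by one.
Writing a sum over orbit representatives as a sum over all chains weighted by `1 / |orbit|`, the
non-abelian chains cancel in pairs.
-/

open Pointwise

/-- The stabilizer in `G` of a chain of subgroups of `G` under the conjugation action,
as a subgroup of `G` (via the identification `ConjAct G ≃* G`). -/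
def chainStabilizer {G : Type*} [Group G] [DecidableEq (Subgroup G)]
    (σ : Finset (Subgroup G)) : Subgroup G :=
  Subgroup.map ConjAct.ofConjAct.toMonoidHom (MulAction.stabilizer (ConjAct G) σ)

theorem Group.IsNilpotent.commutator_le_of_isCoatom {P : Type*} [Group P] [Group.IsNilpotent P]
    {K : Subgroup P} (hK : IsCoatom K) : commutator P ≤ K := by
  have := Subgroup.NormalizerCondition.normal_of_coatom K normalizerCondition_of_isNilpotent hK
  obtain ⟨g, -, hg⟩ := SetLike.exists_of_lt (lt_top_iff_ne_top.mpr hK.1)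
  refine Subgroup.Normal.commutator_le_of_self_sup_commutative_eq_top
    (H := Subgroup.zpowers g) (hK.2 _ (left_lt_sup.mpr ?_)) inferInstance
  exact fun h => hg (h (Subgroup.mem_zpowers g))

theorem Group.IsNilpotent.commutator_le_frattini {P : Type*} [Group P] [Group.IsNilpotent P] :
    commutator P ≤ frattini P :=
  le_iInf₂ fun _ hK => Group.IsNilpotent.commutator_le_of_isCoatom hK

theorem Subgroup.eq_of_commutator_sup_eq {G : Type*} [Group G] {T H : Subgroup G} [Finite T]
    (hT : Group.IsNilpotent T) (hHT : H ≤ T) (h : ⁅T, T⁆ ⊔ H = T) : H = T := by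
  suffices H.subgroupOf T ⊔ frattini T = ⊤ by
    exact le_antisymm hHT (Subgroup.subgroupOf_eq_top.mp (frattini_nongenerating this))
  refine top_unique (le_trans ?_ (sup_le_sup_left Group.IsNilpotent.commutator_le_frattini _))
  refine (Subgroup.map_le_map_iff_of_injective T.subtype_injective).mp ?_
  rw [Subgroup.map_sup, Subgroup.map_subgroupOf_eq_of_le hHT, Subgroup.map_subtype_commutator,
    sup_comm, h, ← MonoidHom.range_eq_map, Subgroup.range_subtype]

section Flip

variable {G : Type*} [Group G]

def IsRootedPChain (ℓ : ℕ) (σ : Finset (Subgroup G)) : Prop :=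
  ⊥ ∈ σ ∧ (∀ P ∈ σ, IsPGroup ℓ P) ∧ IsChain (· ≤ ·) (σ : Set (Subgroup G))

open scoped Classical in
/-- With `T` the top of the chain `σ`, this is `P_{m-1}` for `m` minimal with `⁅T, T⁆ ≤ P_m`. -/
noncomputable def flipBase (σ : Finset (Subgroup G)) : Subgroup G :=
  (σ.filter fun P => ¬ ⁅σ.sup id, σ.sup id⁆ ≤ P).sup id

noncomputable def flipSubgroup (σ : Finset (Subgroup G)) : Subgroup G :=
  ⁅σ.sup id, σ.sup id⁆ ⊔ flipBase σ

noncomputable def flipChain [DecidableEq (Subgroup G)] (σ : Finset (Subgroup G)) :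
    Finset (Subgroup G) :=
  if flipSubgroup σ ∈ σ then σ.erase (flipSubgroup σ) else insert (flipSubgroup σ) σ

theorem IsChain.finset_sup_mem {α : Type*} [SemilatticeSup α] [OrderBot α] {σ : Finset α}
    (hσ : IsChain (· ≤ ·) (σ : Set α)) (hne : σ.Nonempty) : σ.sup id ∈ σ := by
  rw [← Finset.sup'_eq_sup hne]
  refine Finset.sup'_mem _ (fun x hx y hy => ?_) σ hne id fun _ h => h
  rcases hσ.total hx hy with h | h
  · rwa [sup_eq_right.mpr h]
  · rwa [sup_eq_left.mpr h]

theorem IsRootedPChain.sup_mem {ℓ : ℕ} {σ : Finset (Subgroup G)} (hσ : IsRootedPChain ℓ σ) :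
    σ.sup id ∈ σ :=
  hσ.2.2.finset_sup_mem ⟨⊥, hσ.1⟩

theorem commutator_sup_ne_bot {σ : Finset (Subgroup G)}
    (hσ : ¬ ∀ P ∈ σ, ∀ a ∈ P, ∀ b ∈ P, a * b = b * a) : ⁅σ.sup id, σ.sup id⁆ ≠ ⊥ := by
  rw [Ne, Subgroup.commutator_self_eq_bot_iff, isMulCommutative_iff_of_setLike]
  refine fun h => hσ fun P hP a ha b hb => h a ?_ b ?_ <;>
    exact Finset.le_sup (f := id) hP ‹_›

theorem flipBase_le_sup (σ : Finset (Subgroup G)) : flipBase σ ≤ σ.sup id := by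
  classical
  exact Finset.sup_mono (Finset.filter_subset _ σ)

theorem flipSubgroup_le_sup (σ : Finset (Subgroup G)) : flipSubgroup σ ≤ σ.sup id :=
  sup_le (Subgroup.commutator_le_self _) (flipBase_le_sup σ)

theorem commutator_le_flipSubgroup (σ : Finset (Subgroup G)) :
    ⁅σ.sup id, σ.sup id⁆ ≤ flipSubgroup σ :=
  le_sup_left

theorem flipSubgroup_ne_bot {σ : Finset (Subgroup G)} (hQ : ⁅σ.sup id, σ.sup id⁆ ≠ ⊥) :
    flipSubgroup σ ≠ ⊥ :=
  fun h => hQ (le_bot_iff.mp (h ▸ commutator_le_flipSubgroup σ))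

theorem flipBase_mem {σ : Finset (Subgroup G)} (hbot : ⊥ ∈ σ)
    (hσ : IsChain (· ≤ ·) (σ : Set (Subgroup G))) (hQ : ⁅σ.sup id, σ.sup id⁆ ≠ ⊥) :
    flipBase σ ∈ σ ∧ ¬ ⁅σ.sup id, σ.sup id⁆ ≤ flipBase σ := by
  classical
  have hbot' : ⊥ ∈ σ.filter fun P => ¬ ⁅σ.sup id, σ.sup id⁆ ≤ P :=
    Finset.mem_filter.mpr ⟨hbot, fun h => hQ (le_bot_iff.mp h)⟩
  have := (hσ.mono fun _ h => (Finset.mem_filter.mp h).1).finset_sup_mem ⟨⊥, hbot'⟩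
  exact Finset.mem_filter.mp (by convert this)

theorem le_flipBase_or_flipSubgroup_le {σ : Finset (Subgroup G)}
    (hσ : IsChain (· ≤ ·) (σ : Set (Subgroup G))) (hM : flipBase σ ∈ σ)
    (hQM : ¬ ⁅σ.sup id, σ.sup id⁆ ≤ flipBase σ) {P : Subgroup G} (hP : P ∈ σ) :
    P ≤ flipBase σ ∨ flipSubgroup σ ≤ P := by
  classical
  by_cases hQP : ⁅σ.sup id, σ.sup id⁆ ≤ P
  · refine Or.inr (sup_le hQP ?_)
    exact (hσ.total hM hP).resolve_right fun hPM => hQM (hQP.trans hPM)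
  · exact Or.inl (Finset.le_sup (f := id) (Finset.mem_filter.mpr ⟨hP, hQP⟩))

theorem flipSubgroup_ne_sup {ℓ : ℕ} [Fact ℓ.Prime] [Finite G] {σ : Finset (Subgroup G)}
    (hσ : IsRootedPChain ℓ σ) (hQ : ⁅σ.sup id, σ.sup id⁆ ≠ ⊥) : flipSubgroup σ ≠ σ.sup id := by
  obtain ⟨hM, hQM⟩ := flipBase_mem hσ.1 hσ.2.2 hQ
  intro h
  have hT : IsPGroup ℓ (σ.sup id : Subgroup G) := hσ.2.1 _ hσ.sup_mem
  have := Subgroup.eq_of_commutator_sup_eq hT.isNilpotent (flipBase_le_sup σ) h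
  exact hQM (this ▸ Subgroup.commutator_le_self _)

variable [DecidableEq (Subgroup G)]

theorem flipSubgroup_insert {σ : Finset (Subgroup G)} {P : Subgroup G} (hPT : P ≤ σ.sup id)
    (hQP : ⁅σ.sup id, σ.sup id⁆ ≤ P) : flipSubgroup (insert P σ) = flipSubgroup σ := by
  have hsup : (insert P σ).sup id = σ.sup id := by
    rw [Finset.sup_insert]
    exact sup_eq_right.mpr hPT
  rw [flipSubgroup, flipSubgroup, flipBase, flipBase, hsup, Finset.filter_insert,
    if_neg (not_not_intro hQP)]

theorem flipSubgroup_erase {σ : Finset (Subgroup G)} {P : Subgroup G} (hT : σ.sup id ∈ σ)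
    (hPT : P ≠ σ.sup id) (hQP : ⁅σ.sup id, σ.sup id⁆ ≤ P) :
    flipSubgroup (σ.erase P) = flipSubgroup σ := by
  by_cases hP : P ∈ σ
  · have hsup : (σ.erase P).sup id = σ.sup id :=
      le_antisymm (Finset.sup_mono (Finset.erase_subset _ _))
        (Finset.le_sup (f := id) (Finset.mem_erase.mpr ⟨hPT.symm, hT⟩))
    conv_rhs => rw [← Finset.insert_erase hP]
    exact (flipSubgroup_insert (hsup ▸ Finset.le_sup (f := id) hP) (hsup ▸ hQP)).symm
  · rw [Finset.erase_eq_of_notMem hP]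

theorem flipChain_flipChain {σ : Finset (Subgroup G)} (hT : σ.sup id ∈ σ)
    (hK : flipSubgroup σ ≠ σ.sup id) : flipChain (flipChain σ) = σ := by
  have hQK := commutator_le_flipSubgroup σ
  by_cases h : flipSubgroup σ ∈ σ
  · rw [show flipChain σ = σ.erase (flipSubgroup σ) from if_pos h, flipChain,
      flipSubgroup_erase hT hK hQK,
      if_neg (Finset.notMem_erase _ _), Finset.insert_erase h]
  · rw [show flipChain σ = insert (flipSubgroup σ) σ from if_neg h, flipChain,
      flipSubgroup_insert (flipSubgroup_le_sup σ) hQK,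
      if_pos (Finset.mem_insert_self _ _), Finset.erase_insert h]

theorem flipChain_ne (σ : Finset (Subgroup G)) : flipChain σ ≠ σ := by
  unfold flipChain
  split_ifs with h
  · exact fun e => Finset.erase_eq_self.mp e h
  · exact fun e => h (Finset.insert_eq_self.mp e)

theorem sup_mem_flipChain {σ : Finset (Subgroup G)} (hT : σ.sup id ∈ σ)
    (hK : flipSubgroup σ ≠ σ.sup id) : σ.sup id ∈ flipChain σ := by
  unfold flipChain
  split_ifs
  · exact Finset.mem_erase.mpr ⟨hK.symm, hT⟩
  · exact Finset.mem_insert_of_mem hT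

theorem neg_one_pow_card_insert_sub_one {α : Type*} [DecidableEq α] {s : Finset α} {a : α}
    (ha : a ∉ s) (hs : s.Nonempty) :
    (-1 : ℤ) ^ ((insert a s).card - 1) = -(-1) ^ (s.card - 1) := by
  obtain ⟨n, hn⟩ := Nat.exists_eq_succ_of_ne_zero hs.card_pos.ne'
  rw [Finset.card_insert_of_notMem ha, hn]
  simp [pow_succ]

theorem neg_one_pow_card_flipChain_sub_one {σ : Finset (Subgroup G)} (hbot : ⊥ ∈ σ)
    (hK : flipSubgroup σ ≠ ⊥) :
    (-1 : ℤ) ^ ((flipChain σ).card - 1) = -(-1) ^ (σ.card - 1) := by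
  unfold flipChain
  split_ifs with h
  · have hne : (σ.erase (flipSubgroup σ)).Nonempty := ⟨⊥, Finset.mem_erase.mpr ⟨hK.symm, hbot⟩⟩
    conv_rhs => rw [← Finset.insert_erase h,
      neg_one_pow_card_insert_sub_one (Finset.notMem_erase _ _) hne, neg_neg]
  · exact neg_one_pow_card_insert_sub_one h ⟨⊥, hbot⟩

theorem isRootedPChain_flipChain {ℓ : ℕ} {σ : Finset (Subgroup G)} (hσ : IsRootedPChain ℓ σ)
    (hQ : ⁅σ.sup id, σ.sup id⁆ ≠ ⊥) : IsRootedPChain ℓ (flipChain σ) := by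
  have hT := hσ.sup_mem
  obtain ⟨hbot, hp, hch⟩ := hσ
  have hK := flipSubgroup_ne_bot hQ
  unfold flipChain
  split_ifs with h
  · exact ⟨Finset.mem_erase.mpr ⟨hK.symm, hbot⟩, fun P hP => hp P (Finset.mem_of_mem_erase hP),
      hch.mono (Finset.coe_subset.mpr (Finset.erase_subset _ _))⟩
  obtain ⟨hM, hQM⟩ := flipBase_mem hbot hch hQ
  refine ⟨Finset.mem_insert_of_mem hbot, fun P hP => ?_, ?_⟩
  · rcases Finset.mem_insert.mp hP with rfl | hP
    · exact (hp _ hT).to_le (flipSubgroup_le_sup σ)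
    · exact hp P hP
  · rw [Finset.coe_insert]
    refine hch.insert fun P hP _ => ?_
    rcases le_flipBase_or_flipSubgroup_le hch hM hQM hP with hPM | hKP
    · exact Or.inr (hPM.trans le_sup_right)
    · exact Or.inl hKP

end Flip

section Equivariance

variable {G : Type*} [Group G]

theorem Subgroup.smul_commutator (g : ConjAct G) (H₁ H₂ : Subgroup G) :
    g • ⁅H₁, H₂⁆ = ⁅g • H₁, g • H₂⁆ :=
  Subgroup.map_commutator H₁ H₂ _

variable [DecidableEq (Subgroup G)]

theorem Finset.sup_id_smul (g : ConjAct G) (σ : Finset (Subgroup G)) :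
    (g • σ).sup id = g • σ.sup id := by
  rw [Finset.smul_finset_def, Finset.sup_image]
  exact (Finset.apply_sup_eq_sup_comp (g • · : Subgroup G → Subgroup G)
    (fun x y => Subgroup.smul_sup g x y) (Subgroup.smul_bot g)).symm

theorem flipBase_smul (g : ConjAct G) (σ : Finset (Subgroup G)) :
    flipBase (g • σ) = g • flipBase σ := by
  classical
  rw [flipBase, flipBase, Finset.sup_id_smul, ← Subgroup.smul_commutator, Finset.smul_finset_def,
    Finset.filter_image, ← Finset.sup_id_smul, Finset.smul_finset_def]
  simp only [Subgroup.pointwise_smul_le_pointwise_smul_iff]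

theorem flipSubgroup_smul (g : ConjAct G) (σ : Finset (Subgroup G)) :
    flipSubgroup (g • σ) = g • flipSubgroup σ := by
  rw [flipSubgroup, flipSubgroup, flipBase_smul, Finset.sup_id_smul, Subgroup.smul_sup,
    Subgroup.smul_commutator]

theorem flipChain_smul (g : ConjAct G) (σ : Finset (Subgroup G)) :
    flipChain (g • σ) = g • flipChain σ := by
  rw [flipChain, flipChain, flipSubgroup_smul]
  by_cases h : flipSubgroup σ ∈ σ
  · rw [if_pos ((Finset.smul_mem_smul_finset_iff g).mpr h), if_pos h,
      Finset.smul_finset_def, Finset.smul_finset_def,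
      Finset.image_erase (MulAction.injective g)]
  · rw [if_neg (mt (Finset.smul_mem_smul_finset_iff g).mp h), if_neg h, Finset.smul_finset_insert]

theorem stabilizer_flipChain {σ : Finset (Subgroup G)} (hσ : flipChain (flipChain σ) = σ) :
    MulAction.stabilizer (ConjAct G) (flipChain σ) = MulAction.stabilizer (ConjAct G) σ := by
  refine le_antisymm (fun g hg => ?_) fun g hg => ?_ <;> rw [MulAction.mem_stabilizer_iff] at hg ⊢
  · rw [← hσ, ← flipChain_smul, hg]
  · rw [← flipChain_smul, hg]

theorem chainStabilizer_smul (g : ConjAct G) (σ : Finset (Subgroup G)) :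
    chainStabilizer (g • σ)
      = Subgroup.map (MulAut.conj (ConjAct.ofConjAct g)).toMonoidHom (chainStabilizer σ) := by
  rw [chainStabilizer, chainStabilizer, MulAction.stabilizer_smul_eq_stabilizer_map_conj,
    Subgroup.map_map, Subgroup.map_map]
  rfl

theorem IsRootedPChain.smul {ℓ : ℕ} {σ : Finset (Subgroup G)} (hσ : IsRootedPChain ℓ σ)
    (g : ConjAct G) : IsRootedPChain ℓ (g • σ) := by
  obtain ⟨hbot, hp, hch⟩ := hσ
  refine ⟨Finset.mem_smul_finset.mpr ⟨⊥, hbot, Subgroup.smul_bot g⟩, ?_, ?_⟩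
  · intro P hP
    obtain ⟨P₀, hP₀, rfl⟩ := Finset.mem_smul_finset.mp hP
    exact (hp P₀ hP₀).map _
  · rw [Finset.coe_smul_finset]
    exact Monotone.isChain_image (fun _ _ => Subgroup.pointwise_smul_le_pointwise_smul_iff.mpr) hch

theorem forall_mul_comm_smul {σ : Finset (Subgroup G)}
    (hσ : ∀ P ∈ σ, ∀ a ∈ P, ∀ b ∈ P, a * b = b * a) (g : ConjAct G) :
    ∀ P ∈ g • σ, ∀ a ∈ P, ∀ b ∈ P, a * b = b * a := by
  intro P hP a ha b hb
  obtain ⟨P₀, hP₀, rfl⟩ := Finset.mem_smul_finset.mp hP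
  obtain ⟨x, hx, rfl⟩ := (Subgroup.mem_smul_pointwise_iff_exists a g P₀).mp ha
  obtain ⟨y, hy, rfl⟩ := (Subgroup.mem_smul_pointwise_iff_exists b g P₀).mp hb
  rw [← smul_mul', ← smul_mul', hσ P₀ hP₀ x hx y hy]

end Equivariance

open MulAction in
theorem Finset.sum_eq_sum_div_ncard_orbit {M α : Type*} [Group M] [MulAction M α]
    {S R : Finset α} (hRS : R ⊆ S) (hS : ∀ g : M, ∀ x ∈ S, g • x ∈ S)
    (hR : ∀ x ∈ S, ∃! r, r ∈ R ∧ ∃ g : M, g • x = r)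
    (t : α → ℚ) (ht : ∀ (g : M) x, t (g • x) = t x) :
    ∑ r ∈ R, t r = ∑ x ∈ S, t x / (orbit M x).ncard := by
  classical
  have hS_orbit : ∀ x ∈ S, (S.filter (· ∈ orbit M x)).card = (orbit M x).ncard := by
    intro x hx
    rw [← Set.ncard_coe_finset, Finset.coe_filter]
    congr 1
    ext y
    refine ⟨fun h => h.2, fun h => ⟨?_, h⟩⟩
    obtain ⟨g, rfl⟩ := h
    exact hS g x hx
  have hR_orbit : ∀ x ∈ S, (R.filter (· ∈ orbit M x)).card = 1 := by
    intro x hx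
    obtain ⟨r, hr, huniq⟩ := hR x hx
    exact Finset.card_eq_one.mpr ⟨r, Finset.eq_singleton_iff_unique_mem.mpr
      ⟨Finset.mem_filter.mpr hr, fun y hy => huniq y (Finset.mem_filter.mp hy)⟩⟩
  have hconst : ∀ x, ∀ y ∈ orbit M x, t y / (orbit M y).ncard = t x / (orbit M x).ncard := by
    rintro x _ ⟨g, rfl⟩
    rw [ht, orbit_smul]
  calc ∑ r ∈ R, t r
      = ∑ r ∈ R, ∑ x ∈ S.filter (· ∈ orbit M r), t r / (orbit M r).ncard := by
        refine Finset.sum_congr rfl fun r hr => ?_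
        have hpos : 0 < (S.filter (· ∈ orbit M r)).card :=
          Finset.card_pos.mpr ⟨r, Finset.mem_filter.mpr ⟨hRS hr, mem_orbit_self r⟩⟩
        rw [Finset.sum_const, hS_orbit r (hRS hr), nsmul_eq_mul, mul_div_cancel₀]
        exact_mod_cast (hS_orbit r (hRS hr) ▸ hpos).ne'
    _ = ∑ x ∈ S, ∑ r ∈ R.filter (· ∈ orbit M x), t r / (orbit M r).ncard := by
        refine Finset.sum_comm' fun r x => ?_
        simp only [Finset.mem_filter, mem_orbit_symm (a₁ := r)]
        tauto
    _ = ∑ x ∈ S, t x / (orbit M x).ncard := by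
        refine Finset.sum_congr rfl fun x hx => ?_
        rw [Finset.sum_congr rfl fun r hr => hconst x r (Finset.mem_filter.mp hr).2,
          Finset.sum_const, hR_orbit x hx, one_smul]

section Cancellation

variable {G : Type*} [Group G]

variable [DecidableEq (Subgroup G)]

def chainTerm (f : Subgroup G → ℤ) (σ : Finset (Subgroup G)) : ℤ :=
  (-1) ^ (σ.card - 1) * f (chainStabilizer σ)

noncomputable def chainWeight (f : Subgroup G → ℤ) (σ : Finset (Subgroup G)) : ℚ :=
  chainTerm f σ / (MulAction.orbit (ConjAct G) σ).ncard

theorem chainTerm_smul {f : Subgroup G → ℤ}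
    (hf : ∀ (g : G) (H : Subgroup G), f (Subgroup.map (MulAut.conj g).toMonoidHom H) = f H)
    (g : ConjAct G) (σ : Finset (Subgroup G)) : chainTerm f (g • σ) = chainTerm f σ := by
  rw [chainTerm, chainTerm, Finset.card_smul_finset, chainStabilizer_smul, hf]

variable [Finite G] {ℓ : ℕ} [Fact ℓ.Prime] {σ : Finset (Subgroup G)}

theorem IsRootedPChain.flipChain_flipChain (hσ : IsRootedPChain ℓ σ)
    (hQ : ⁅σ.sup id, σ.sup id⁆ ≠ ⊥) : flipChain (flipChain σ) = σ :=
  _root_.flipChain_flipChain hσ.sup_mem (flipSubgroup_ne_sup hσ hQ)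

theorem IsRootedPChain.not_forall_mul_comm_flipChain (hσ : IsRootedPChain ℓ σ)
    (hQ : ⁅σ.sup id, σ.sup id⁆ ≠ ⊥) :
    ¬ ∀ P ∈ flipChain σ, ∀ a ∈ P, ∀ b ∈ P, a * b = b * a :=
  fun h => hQ (Subgroup.commutator_self_eq_bot_iff.mpr (isMulCommutative_iff_of_setLike.mpr
    (h _ (sup_mem_flipChain hσ.sup_mem (flipSubgroup_ne_sup hσ hQ)))))

theorem IsRootedPChain.chainWeight_flipChain (hσ : IsRootedPChain ℓ σ)
    (hQ : ⁅σ.sup id, σ.sup id⁆ ≠ ⊥) (f : Subgroup G → ℤ) :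
    chainWeight f (flipChain σ) = -chainWeight f σ := by
  have hstab := stabilizer_flipChain (hσ.flipChain_flipChain hQ)
  rw [chainWeight, chainWeight, chainTerm, chainTerm, chainStabilizer, chainStabilizer, hstab,
    ← MulAction.index_stabilizer, ← MulAction.index_stabilizer, hstab,
    neg_one_pow_card_flipChain_sub_one hσ.1 (flipSubgroup_ne_bot hQ)]
  push_cast
  ring

theorem sum_chainWeight_eq_zero {S : Finset (Finset (Subgroup G))}
    (hS : ∀ σ, σ ∈ S ↔ IsRootedPChain ℓ σ ∧ ¬ ∀ P ∈ σ, ∀ a ∈ P, ∀ b ∈ P, a * b = b * a)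
    (f : Subgroup G → ℤ) : ∑ σ ∈ S, chainWeight f σ = 0 := by
  have hflip : ∀ σ ∈ S, IsRootedPChain ℓ σ ∧ ⁅σ.sup id, σ.sup id⁆ ≠ ⊥ := fun σ hσ =>
    ⟨((hS σ).mp hσ).1, commutator_sup_ne_bot ((hS σ).mp hσ).2⟩
  refine Finset.sum_involution (fun σ _ => flipChain σ) (fun σ hσ => ?_)
    (fun σ _ _ => flipChain_ne σ) (fun σ hσ => ?_) (fun σ hσ => ?_)
  · rw [(hflip σ hσ).1.chainWeight_flipChain (hflip σ hσ).2, add_neg_cancel]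
  · obtain ⟨hσ, hQ⟩ := hflip σ hσ
    exact (hS _).mpr ⟨isRootedPChain_flipChain hσ hQ, hσ.not_forall_mul_comm_flipChain hQ⟩
  · exact (hflip σ hσ).1.flipChain_flipChain (hflip σ hσ).2

end Cancellation

theorem stmt_11_general {G : Type*} [Group G] [Finite G] [DecidableEq (Subgroup G)]
    (ℓ : ℕ) (hℓ : ℓ.Prime)
    (Δ Δ' : Finset (Finset (Subgroup G)))
    (hΔ : ∀ σ : Finset (Subgroup G), σ ∈ Δ ↔
      ((⊥ : Subgroup G) ∈ σ ∧ (∀ P ∈ σ, IsPGroup ℓ P) ∧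
        IsChain (· ≤ ·) (σ : Set (Subgroup G))))
    (hΔ' : ∀ σ : Finset (Subgroup G), σ ∈ Δ' ↔
      (σ ∈ Δ ∧ ∀ P ∈ σ, ∀ a ∈ P, ∀ b ∈ P, a * b = b * a))
    (f : Subgroup G → ℤ)
    (hf : ∀ (g : G) (H : Subgroup G), f (Subgroup.map (MulAut.conj g).toMonoidHom H) = f H)
    (R R' : Finset (Finset (Subgroup G))) (hR : R ⊆ Δ) (hR' : R' ⊆ Δ')
    (hRrep : ∀ σ ∈ Δ, ∃! ρ, ρ ∈ R ∧ ∃ g : ConjAct G, g • σ = ρ)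
    (hR'rep : ∀ σ ∈ Δ', ∃! ρ, ρ ∈ R' ∧ ∃ g : ConjAct G, g • σ = ρ) :
    ∑ σ ∈ R, (-1 : ℤ) ^ (σ.card - 1) * f (chainStabilizer σ)
      = ∑ σ ∈ R', (-1 : ℤ) ^ (σ.card - 1) * f (chainStabilizer σ) := by
  have : Fact ℓ.Prime := ⟨hℓ⟩
  have hΔ'Δ : Δ' ⊆ Δ := fun σ hσ => ((hΔ' σ).mp hσ).1
  have hΔ_smul : ∀ g : ConjAct G, ∀ σ ∈ Δ, g • σ ∈ Δ :=
    fun g σ hσ => (hΔ _).mpr (IsRootedPChain.smul ((hΔ σ).mp hσ) g)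
  have hΔ'_smul : ∀ g : ConjAct G, ∀ σ ∈ Δ', g • σ ∈ Δ' := fun g σ hσ =>
    (hΔ' _).mpr ⟨hΔ_smul g σ (hΔ'Δ hσ), forall_mul_comm_smul ((hΔ' σ).mp hσ).2 g⟩
  have hcancel : ∑ σ ∈ Δ \ Δ', chainWeight f σ = 0 :=
    sum_chainWeight_eq_zero (fun σ => by rw [Finset.mem_sdiff, hΔ', hΔ, IsRootedPChain]; tauto) f
  have ht : ∀ (g : ConjAct G) σ, (chainTerm f (g • σ) : ℚ) = chainTerm f σ :=
    fun g σ => congrArg _ (chainTerm_smul hf g σ)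
  have key : ∑ σ ∈ R, (chainTerm f σ : ℚ) = ∑ σ ∈ R', (chainTerm f σ : ℚ) := by
    rw [Finset.sum_eq_sum_div_ncard_orbit hR hΔ_smul hRrep _ ht,
      Finset.sum_eq_sum_div_ncard_orbit hR' hΔ'_smul hR'rep _ ht, ← Finset.sum_sdiff hΔ'Δ,
      add_eq_right]
    exact hcancel
  exact_mod_cast key

/-- Let `G` be a finite group, `ℓ` a prime with `ℓ ∤ |Z(G)|`, `Δ` the complex of chains
`1 = P₀ < ⋯ < Pₙ` of `ℓ`-subgroups of `G` starting at the trivial subgroup, and `Δ'`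
the subcomplex of chains all of whose terms are abelian.  Then, for any integer-valued
conjugation-stable function `f` on subgroups of `G`, the alternating sums of
`f(G_σ)` over `G`-orbit representatives of chains of `Δ` and of `Δ'` coincide. -/
theorem stmt_11 {G : Type*} [Group G] [Finite G] [DecidableEq (Subgroup G)]
    (ℓ : ℕ) (hℓ : ℓ.Prime)
    (hcenter : ¬ ℓ ∣ Nat.card (Subgroup.center G))
    (Δ Δ' : Finset (Finset (Subgroup G)))
    (hΔ : ∀ σ : Finset (Subgroup G), σ ∈ Δ ↔
      ((⊥ : Subgroup G) ∈ σ ∧ (∀ P ∈ σ, IsPGroup ℓ P) ∧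
        IsChain (· ≤ ·) (σ : Set (Subgroup G))))
    (hΔ' : ∀ σ : Finset (Subgroup G), σ ∈ Δ' ↔
      (σ ∈ Δ ∧ ∀ P ∈ σ, ∀ a ∈ P, ∀ b ∈ P, a * b = b * a))
    (f : Subgroup G → ℤ)
    (hf : ∀ (g : G) (H : Subgroup G), f (Subgroup.map (MulAut.conj g).toMonoidHom H) = f H)
    (R R' : Finset (Finset (Subgroup G))) (hR : R ⊆ Δ) (hR' : R' ⊆ Δ')
    (hRrep : ∀ σ ∈ Δ, ∃! ρ, ρ ∈ R ∧ ∃ g : ConjAct G, g • σ = ρ)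
    (hR'rep : ∀ σ ∈ Δ', ∃! ρ, ρ ∈ R' ∧ ∃ g : ConjAct G, g • σ = ρ) :
    ∑ σ ∈ R, (-1 : ℤ) ^ (σ.card - 1) * f (chainStabilizer σ)
      = ∑ σ ∈ R', (-1 : ℤ) ^ (σ.card - 1) * f (chainStabilizer σ) :=
  stmt_11_general ℓ hℓ Δ Δ' hΔ hΔ' f hf R R' hR hR' hRrep hR'rep
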